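/- For c = 0 there exists a twice continuously differentiable increasing solution θ : [0, +∞) → ℝ of θ'' + F(θ) = 0 with θ(0) = θ_hl, θ'(0) = √(2·∫_{θ_hl}^{θ₊} F(u) du), θ'(x) > 0 for all x ≥ 0, and θ(x) → θ₊ as x → +∞; moreover it conserves the Hamiltonian, i.e. (1/2)·θ'(x)² + ∫_{θ_hl}^{θ(x)} F(u) du = ∫_{θ_hl}^{θ₊} F(u) du for all x ≥ 0. -/

import Mathlib

set_option maxHeartbeats 1000000


open Set Filter

open Topology MeasureTheory in
/-- For `c = 0` there exists a monotone heteroclinic solution of `θ'' + F(θ) = 0`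
starting at `θ_hl` with slope `√(2∫_{θ_hl}^{θ₊} F(u) du)`, tending to `θ₊`, which
conserves the Hamiltonian `v²/2 + ∫_{θ_hl}^{u} F`.
(Derivatives on `[0, ∞)` are taken within `[0, ∞)`.) -/
theorem stmt17 (θhl θp : ℝ) (h0 : 0 < θhl) (h1 : θhl < θp)
    (F : ℝ → ℝ) (W : Set ℝ) (hW : IsOpen W) (hWsub : Icc θhl θp ⊆ W)
    (hF : ContDiffOn ℝ (⊤ : ℕ∞) F W) (hFzero : F θp = 0)
    (hFpos : ∀ u ∈ Ico θhl θp, 0 < F u) (hF' : deriv F θp < 0) :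
    ∃ θ : ℝ → ℝ,
      ContDiffOn ℝ 2 θ (Ici 0) ∧
      (∀ x ∈ Ici (0 : ℝ), derivWithin (derivWithin θ (Ici 0)) (Ici 0) x
          + F (θ x) = 0) ∧
      θ 0 = θhl ∧
      derivWithin θ (Ici 0) 0 = Real.sqrt (2 * ∫ u in θhl..θp, F u) ∧
      (∀ x ∈ Ici (0 : ℝ), 0 < derivWithin θ (Ici 0) x) ∧
      Tendsto θ atTop (nhds θp) ∧
      (∀ x ∈ Ici (0 : ℝ),
        (1 / 2) * (derivWithin θ (Ici 0) x) ^ 2 + (∫ u in θhl..(θ x), F u) =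
          ∫ u in θhl..θp, F u) := by
  -- ## Step 1: extend the good region slightly to the left of θhl
  have hθhlW : θhl ∈ W := hWsub ⟨le_refl _, h1.le⟩
  have hFcont : ContinuousOn F W := hF.continuousOn
  have hFcontAt : ∀ u ∈ W, ContinuousAt F u := fun u hu =>
    hFcont.continuousAt (hW.mem_nhds hu)
  have hmem : {u | 0 < F u} ∩ W ∈ 𝓝 θhl := by
    refine inter_mem ?_ (hW.mem_nhds hθhlW)
    exact (hFcontAt θhl hθhlW).preimage_mem_nhds (Ioi_mem_nhds (hFpos θhl ⟨le_refl _, h1⟩))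
  obtain ⟨δ, hδpos, hδ⟩ := Metric.mem_nhds_iff.1 hmem
  set a := θhl - δ/2 with ha_def
  have haθhl : a < θhl := by rw [ha_def]; linarith
  have hIccball : Icc a θhl ⊆ {u | 0 < F u} ∩ W := by
    intro u hu
    apply hδ
    rw [Metric.mem_ball, Real.dist_eq, abs_sub_lt_iff]
    constructor <;>
      · have h2 := hu.1; have h3 := hu.2; rw [ha_def] at h2; linarith
  have haθp : a < θp := lt_trans haθhl h1
  have hIccW : Icc a θp ⊆ W := by
    intro u hu
    rcases le_total u θhl with h | h
    · exact (hIccball ⟨hu.1, h⟩).2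
    · exact hWsub ⟨h, hu.2⟩
  have hFpos' : ∀ u ∈ Ico a θp, 0 < F u := by
    intro u hu
    rcases le_total u θhl with h | h
    · exact (hIccball ⟨hu.1, h⟩).1
    · exact hFpos u ⟨h, hu.2⟩
  have hFc : ContinuousOn F (Icc a θp) := hFcont.mono hIccW
  -- ## Step 2: the potential G, the energy E, and `ψ = √(2(E - G))`
  set G : ℝ → ℝ := fun u => ∫ s in θhl..u, F s with hG_def
  set E : ℝ := ∫ s in θhl..θp, F s with hE_def
  have hmemIcc : θhl ∈ Icc a θp := ⟨haθhl.le, h1.le⟩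
  have hθpIcc : θp ∈ Icc a θp := ⟨haθp.le, le_refl _⟩
  have hFint : ∀ u ∈ Icc a θp, ∀ v ∈ Icc a θp, IntervalIntegrable F volume u v :=
    fun u hu v hv => (hFc.mono (uIcc_subset_Icc hu hv)).intervalIntegrable
  have hGderiv : ∀ u ∈ Icc a θp, HasDerivAt G (F u) u := by
    intro u hu
    exact intervalIntegral.integral_hasDerivAt_right (hFint θhl hmemIcc u hu)
      (ContinuousAt.stronglyMeasurableAtFilter hW hFcontAt u (hIccW hu))
      (hFcontAt u (hIccW hu))
  have hEG : ∀ u ∈ Icc a θp, E - G u = ∫ s in u..θp, F s := by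
    intro u hu
    have h2 := intervalIntegral.integral_add_adjacent_intervals
      (hFint θhl hmemIcc u hu) (hFint u hu θp hθpIcc)
    rw [hG_def, hE_def]
    simp only [← h2]
    ring
  have hEGpos : ∀ u ∈ Ico a θp, 0 < E - G u := by
    intro u hu
    rw [hEG u ⟨hu.1, hu.2.le⟩]
    exact intervalIntegral.intervalIntegral_pos_of_pos_on
      (hFint u ⟨hu.1, hu.2.le⟩ θp hθpIcc)
      (fun x hx => hFpos' x ⟨le_trans hu.1 hx.1.le, hx.2⟩) hu.2
  set hfun : ℝ → ℝ := fun u => 2 * (E - G u) with hh_def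
  set ψ : ℝ → ℝ := fun u => Real.sqrt (hfun u) with hψ_def
  set ρ : ℝ → ℝ := fun u => (ψ u)⁻¹ with hρ_def
  have hhpos : ∀ u ∈ Ico a θp, 0 < hfun u := fun u hu => by
    have := hEGpos u hu; rw [hh_def]; simp only []; linarith
  have hψpos : ∀ u ∈ Ico a θp, 0 < ψ u := fun u hu => Real.sqrt_pos.2 (hhpos u hu)
  have hρpos : ∀ u ∈ Ico a θp, 0 < ρ u := fun u hu => inv_pos.2 (hψpos u hu)
  have hhderiv : ∀ u ∈ Icc a θp, HasDerivAt hfun (-2 * F u) u := by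
    intro u hu
    have h2 := ((hGderiv u hu).const_sub E).const_mul (2:ℝ)
    exact h2.congr_deriv (by ring)
  have hhcont : ContinuousOn hfun (Icc a θp) := fun u hu =>
    ((hhderiv u hu).continuousAt).continuousWithinAt
  have hψcont : ContinuousOn ψ (Icc a θp) := Real.continuous_sqrt.comp_continuousOn hhcont
  have hρcont : ContinuousOn ρ (Ico a θp) :=
    (hψcont.mono Ico_subset_Icc_self).inv₀ (fun u hu => (hψpos u hu).ne')
  have hψderiv : ∀ u ∈ Ico a θp, HasDerivAt ψ (-(F u) / ψ u) u := by
    intro u hu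
    have h2 := (Real.hasDerivAt_sqrt (hhpos u hu).ne').comp u (hhderiv u ⟨hu.1, hu.2.le⟩)
    refine h2.congr_deriv ?_
    simp only [hψ_def]
    have h3 := (hhpos u hu)
    have h4 : Real.sqrt (hfun u) ≠ 0 := (Real.sqrt_pos.2 h3).ne'
    field_simp
  -- ## Step 3: upper bound `ψ u ≤ √L (θp - u)` near θp
  obtain ⟨L, hL, hψub⟩ : ∃ L : ℝ, 0 < L ∧
      ∀ u ∈ Ico θhl θp, ψ u ≤ Real.sqrt L * (θp - u) := by
    have hdF : ContinuousOn (deriv F) W := hF.continuousOn_deriv_of_isOpen hW (by simp)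
    obtain ⟨M, hM⟩ := (isCompact_Icc (a := θhl) (b := θp)).exists_bound_of_continuousOn
      (hdF.mono hWsub)
    set L := max M 1 with hL_def
    have hL : 0 < L := lt_of_lt_of_le one_pos (le_max_right _ _)
    refine ⟨L, hL, ?_⟩
    have hFdiff : ∀ x ∈ Icc θhl θp, DifferentiableAt ℝ F x := fun x hx =>
      (hF.differentiableOn (by simp)).differentiableAt (hW.mem_nhds (hWsub hx))
    have hFub : ∀ u ∈ Icc θhl θp, F u ≤ L * (θp - u) := by
      intro u hu
      have h2 := (convex_Icc θhl θp).norm_image_sub_le_of_norm_deriv_le hFdiff hM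
        hu (right_mem_Icc.2 h1.le)
      rw [hFzero, zero_sub, norm_neg, Real.norm_eq_abs, Real.norm_eq_abs] at h2
      have h3 : |θp - u| = θp - u := abs_of_nonneg (by linarith [hu.2])
      rw [h3] at h2
      have h4 : F u ≤ M * (θp - u) := le_trans (le_abs_self _) h2
      have h5 : θp - u ≥ 0 := by linarith [hu.2]
      nlinarith [le_max_left M 1]
    have hint2 : ∀ u ∈ Icc θhl θp, (∫ s in u..θp, L * (θp - s)) = L * (θp - u)^2 / 2 := by
      intro u hu
      have hderiv : ∀ s ∈ uIcc u θp,
          HasDerivAt (fun s => -(L * (θp - s)^2 / 2)) (L * (θp - s)) s := by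
        intro s _
        have h3 : HasDerivAt (fun s : ℝ => θp - s) (-1) s := by
          simpa using (hasDerivAt_id s).const_sub θp
        have h4 : HasDerivAt (fun s : ℝ => (θp - s)^2) (2 * (θp - s) * (-1)) s := by
          have := h3.pow 2
          norm_num at this
          refine this.congr_deriv ?_
          ring
        have h5 := h4.const_mul (-(L/2))
        have e : (fun s => -(L * (θp - s)^2 / 2)) = fun y => -(L / 2) * (θp - y) ^ 2 := by
          ext s; ring
        rw [e]
        exact h5.congr_deriv (by ring)
      have hint3 : IntervalIntegrable (fun s => L * (θp - s)) volume u θp :=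
        (Continuous.continuousOn (continuous_const.mul
          (continuous_const.sub continuous_id))).intervalIntegrable
      rw [intervalIntegral.integral_eq_sub_of_hasDerivAt hderiv hint3]
      ring
    intro u hu
    have huIcc : u ∈ Icc θhl θp := ⟨hu.1, hu.2.le⟩
    have huIcc' : u ∈ Icc a θp := ⟨le_trans haθhl.le hu.1, hu.2.le⟩
    have hhub : hfun u ≤ L * (θp - u)^2 := by
      rw [hh_def]
      simp only []
      rw [hEG u huIcc']
      have h2 : (∫ s in u..θp, F s) ≤ ∫ s in u..θp, L * (θp - s) := by
        apply intervalIntegral.integral_mono_on hu.2.le (hFint u huIcc' θp hθpIcc)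
          ((Continuous.continuousOn (continuous_const.mul
            (continuous_const.sub continuous_id))).intervalIntegrable)
        intro s hs
        exact hFub s ⟨le_trans hu.1 hs.1, hs.2⟩
      rw [hint2 u huIcc] at h2
      linarith
    rw [hψ_def]
    simp only []
    calc Real.sqrt (hfun u) ≤ Real.sqrt (L * (θp - u)^2) := Real.sqrt_le_sqrt hhub
      _ = Real.sqrt L * (θp - u) := by
          rw [Real.sqrt_mul hL.le, Real.sqrt_sq (by linarith [hu.2] : (0:ℝ) ≤ θp - u)]
  -- ## Step 4: the time-map X and its divergence at θp
  set X : ℝ → ℝ := fun u => ∫ s in θhl..u, ρ s with hX_def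
  have hmemIco : θhl ∈ Ico a θp := ⟨haθhl.le, h1⟩
  have hρint : ∀ u ∈ Ico a θp, ∀ v ∈ Ico a θp, IntervalIntegrable ρ volume u v :=
    fun u hu v hv => (hρcont.mono (ordConnected_Ico.uIcc_subset hu hv)).intervalIntegrable
  have hXderiv : ∀ u ∈ Ioo a θp, HasDerivAt X (ρ u) u := by
    intro u hu
    refine intervalIntegral.integral_hasDerivAt_right
      (hρint θhl hmemIco u (Ioo_subset_Ico_self hu)) ?_ ?_
    · exact ContinuousOn.stronglyMeasurableAtFilter isOpen_Ioo
        (hρcont.mono Ioo_subset_Ico_self) u hu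
    · exact hρcont.continuousAt
        (Filter.mem_of_superset (isOpen_Ioo.mem_nhds hu) Ioo_subset_Ico_self)
  have hXcont : ContinuousOn X (Ioo a θp) := fun u hu =>
    ((hXderiv u hu).continuousAt).continuousWithinAt
  have hXmono : StrictMonoOn X (Ioo a θp) := by
    apply strictMonoOn_of_deriv_pos (convex_Ioo a θp) hXcont
    intro u hu
    rw [interior_Ioo] at hu
    rw [(hXderiv u hu).deriv]
    exact hρpos u (Ioo_subset_Ico_self hu)
  have hX0 : X θhl = 0 := intervalIntegral.integral_same
  have hsL : 0 < Real.sqrt L := Real.sqrt_pos.2 hL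
  have hρlb : ∀ u ∈ Ico θhl θp, (Real.sqrt L)⁻¹ * (θp - u)⁻¹ ≤ ρ u := by
    intro u hu
    have hu' : u ∈ Ico a θp := ⟨le_trans haθhl.le hu.1, hu.2⟩
    have h2 : 0 < θp - u := by linarith [hu.2]
    rw [hρ_def]
    rw [← mul_inv]
    exact inv_anti₀ (hψpos u hu') (hψub u hu)
  have hXlb : ∀ u ∈ Ico θhl θp,
      (Real.sqrt L)⁻¹ * (Real.log (θp - θhl) - Real.log (θp - u)) ≤ X u := by
    intro u hu
    have hu' : u ∈ Ico a θp := ⟨le_trans haθhl.le hu.1, hu.2⟩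
    have hcont2 : ContinuousOn (fun s => (Real.sqrt L)⁻¹ * (θp - s)⁻¹) (Icc θhl u) := by
      apply ContinuousOn.mul continuousOn_const
      apply ContinuousOn.inv₀ (Continuous.continuousOn
        (continuous_const.sub continuous_id))
      intro s hs
      have h3 : s ≤ u := hs.2
      have h4 : s < θp := lt_of_le_of_lt h3 hu.2
      exact (sub_pos.2 h4).ne'
    have hint2 : IntervalIntegrable (fun s => (Real.sqrt L)⁻¹ * (θp - s)⁻¹) volume θhl u := by
      rw [intervalIntegrable_iff_integrableOn_Icc_of_le hu.1]
      exact hcont2.integrableOn_compact isCompact_Icc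
    have heval : (∫ s in θhl..u, (Real.sqrt L)⁻¹ * (θp - s)⁻¹)
        = (Real.sqrt L)⁻¹ * (Real.log (θp - θhl) - Real.log (θp - u)) := by
      have hderiv : ∀ s ∈ uIcc θhl u,
          HasDerivAt (fun s => -(Real.sqrt L)⁻¹ * Real.log (θp - s))
            ((Real.sqrt L)⁻¹ * (θp - s)⁻¹) s := by
        intro s hs
        rw [uIcc_of_le hu.1] at hs
        have h2 : θp - s ≠ 0 := by
          have h5 : s < θp := lt_of_le_of_lt hs.2 hu.2
          exact (sub_pos.2 h5).ne'
        have h3 : HasDerivAt (fun s : ℝ => θp - s) (-1) s := by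
          simpa using (hasDerivAt_id s).const_sub θp
        have h4 := (Real.hasDerivAt_log h2).comp s h3
        have h5 := h4.const_mul (-(Real.sqrt L)⁻¹)
        refine h5.congr_deriv ?_
        ring
      rw [intervalIntegral.integral_eq_sub_of_hasDerivAt hderiv hint2]
      ring
    calc (Real.sqrt L)⁻¹ * (Real.log (θp - θhl) - Real.log (θp - u))
        = ∫ s in θhl..u, (Real.sqrt L)⁻¹ * (θp - s)⁻¹ := heval.symm
      _ ≤ ∫ s in θhl..u, ρ s := by
          apply intervalIntegral.integral_mono_on hu.1 hint2 (hρint θhl hmemIco u hu')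
          intro s hs
          exact hρlb s ⟨hs.1, lt_of_le_of_lt hs.2 hu.2⟩
  have hlog : Tendsto (fun u => Real.log (θp - u)) (𝓝[<] θp) atBot := by
    apply Real.tendsto_log_nhdsGT_zero.comp
    apply tendsto_nhdsWithin_of_tendsto_nhds_of_eventually_within
    · have h2 : Tendsto (fun u : ℝ => θp - u) (𝓝 θp) (𝓝 (θp - θp)) :=
        (continuous_const.sub continuous_id).tendsto θp
      rw [sub_self] at h2
      exact h2.mono_left nhdsWithin_le_nhds
    · filter_upwards [self_mem_nhdsWithin] with u hu
      exact sub_pos.2 (mem_Iio.1 hu)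
  have hXtop : Tendsto X (𝓝[<] θp) atTop := by
    have hφ : Tendsto (fun u => (Real.sqrt L)⁻¹ *
        (Real.log (θp - θhl) - Real.log (θp - u))) (𝓝[<] θp) atTop := by
      apply Tendsto.const_mul_atTop (inv_pos.2 hsL)
      have h2 : Tendsto (fun u => -Real.log (θp - u)) (𝓝[<] θp) atTop :=
        tendsto_neg_atBot_atTop.comp hlog
      have h3 := tendsto_atTop_add_const_left _ (Real.log (θp - θhl)) h2
      simpa [sub_eq_add_neg] using h3
    apply tendsto_atTop_mono' (𝓝[<] θp) _ hφ
    filter_upwards [Ioo_mem_nhdsLT_of_mem ⟨h1, le_refl θp⟩] with u hu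
    exact hXlb u ⟨hu.1.le, hu.2⟩
  -- ## Step 5: the inverse function θ of X
  set a' := (a + θhl) / 2 with ha'_def
  have ha'1 : a < a' := by rw [ha'_def]; linarith
  have ha'2 : a' < θhl := by rw [ha'_def]; linarith
  have ha'θp : a' < θp := lt_trans ha'2 h1
  have hsub : Ioo a' θp ⊆ Ioo a θp := Ioo_subset_Ioo ha'1.le (le_refl _)
  have hθhlV : θhl ∈ Ioo a' θp := ⟨ha'2, h1⟩
  have ha'V : a' ∈ Ioo a θp := ⟨ha'1, ha'θp⟩
  have hsurj : ∀ t ∈ Ioi (X a'), ∃ u ∈ Ioo a' θp, X u = t := by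
    intro t ht
    have hev1 : ∀ᶠ u in 𝓝[<] θp, t < X u := hXtop.eventually_gt_atTop t
    have hev2 : Ioo a' θp ∈ 𝓝[<] θp := Ioo_mem_nhdsLT_of_mem ⟨ha'θp, le_refl _⟩
    obtain ⟨u0, hu0t, hu0⟩ := (hev1.and (eventually_mem_set.2 hev2)).exists
    have hIccsub : Icc a' u0 ⊆ Ioo a θp := Icc_subset_Ioo ha'1 hu0.2
    have h2 : t ∈ Ioo (X a') (X u0) := ⟨ht, hu0t⟩
    have h3 := intermediate_value_Ioo hu0.1.le (hXcont.mono hIccsub)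
    obtain ⟨u, hu, hXu⟩ := h3 h2
    exact ⟨u, ⟨hu.1, lt_trans hu.2 hu0.2⟩, hXu⟩
  set θ : ℝ → ℝ := Function.invFunOn X (Ioo a' θp) with hθ_def
  set U := Ioi (X a') with hU_def
  have hθ : ∀ t ∈ U, θ t ∈ Ioo a' θp ∧ X (θ t) = t := fun t ht =>
    ⟨Function.invFunOn_mem (hsurj t ht), Function.invFunOn_eq (hsurj t ht)⟩
  have hinj : InjOn X (Ioo a' θp) := (hXmono.mono hsub).injOn
  have hlinv : ∀ u ∈ Ioo a' θp, θ (X u) = u := fun u hu => hinj.leftInvOn_invFunOn hu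
  have hc0 : X a' < 0 := by
    rw [← hX0]
    exact hXmono ha'V (hsub hθhlV) ha'2
  have hXmem : ∀ u ∈ Ioo a' θp, X u ∈ U := fun u hu =>
    hXmono ha'V (hsub hu) hu.1
  have hθimg : θ '' U = Ioo a' θp := by
    apply Subset.antisymm
    · rintro _ ⟨t, ht, rfl⟩
      exact (hθ t ht).1
    · intro u hu
      exact ⟨X u, hXmem u hu, hlinv u hu⟩
  have hθmono : StrictMonoOn θ U := by
    intro t1 ht1 t2 ht2 hlt
    rw [← (hXmono.lt_iff_lt (hsub (hθ t1 ht1).1) (hsub (hθ t2 ht2).1)),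
      (hθ t1 ht1).2, (hθ t2 ht2).2]
    exact hlt
  have hθcont : ∀ t ∈ U, ContinuousAt θ t := by
    intro t ht
    apply hθmono.continuousAt_of_image_mem_nhds (isOpen_Ioi.mem_nhds ht)
    rw [hθimg]
    exact isOpen_Ioo.mem_nhds (hθ t ht).1
  have hθIco : ∀ t ∈ U, θ t ∈ Ico a θp := fun t ht =>
    ⟨le_trans ha'1.le (hθ t ht).1.1.le, (hθ t ht).1.2⟩
  have hθderiv : ∀ t ∈ U, HasDerivAt θ (ψ (θ t)) t := by
    intro t ht
    have h2 : ∀ᶠ y in 𝓝 t, X (θ y) = y := by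
      filter_upwards [isOpen_Ioi.mem_nhds ht] with y hy
      exact (hθ y hy).2
    have h3 : HasDerivAt X (ρ (θ t)) (θ t) := hXderiv (θ t) (hsub (hθ t ht).1)
    have h4 := HasDerivAt.of_local_left_inverse (hθcont t ht) h3
      (ne_of_gt (hρpos (θ t) (hθIco t ht))) h2
    have h5 : (ρ (θ t))⁻¹ = ψ (θ t) := by rw [hρ_def]; simp
    rwa [h5] at h4
  -- ## Step 6: final assembly
  have hθ0 : θ 0 = θhl := by rw [← hX0]; exact hlinv θhl hθhlV
  have hXfacts : ∀ b ∈ Ico θhl θp, ∃ T, 0 ≤ T ∧ X a' < T ∧ θ T = b := by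
    intro b hb
    have hbV : b ∈ Ioo a' θp := ⟨lt_of_lt_of_le ha'2 hb.1, hb.2⟩
    refine ⟨X b, ?_, hXmem b hbV, hlinv b hbV⟩
    rw [← hX0]
    exact hXmono.monotoneOn (hsub hθhlV) (hsub hbV) hb.1
  have hψsq : ∀ u ∈ Ico a θp, ψ u ^ 2 = 2 * (E - G u) := by
    intro u hu
    rw [hψ_def]
    simp only []
    rw [Real.sq_sqrt (hhpos u hu).le, hh_def]
  have hψθhl : ψ θhl = Real.sqrt (2 * E) := by
    rw [hψ_def]
    simp only []
    congr 1
    rw [hh_def]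
    simp only []
    rw [hG_def]
    simp only []
    rw [intervalIntegral.integral_same]
    ring
  have hUopen : IsOpen U := isOpen_Ioi
  have h0U : (0:ℝ) ∈ U := hc0
  have hUIci : Ici (0:ℝ) ⊆ U := fun t ht => lt_of_lt_of_le hc0 ht
  have hθcontOn : ContinuousOn θ U := fun t ht =>
    ((hθderiv t ht).continuousAt).continuousWithinAt
  have hψθderiv : ∀ t ∈ U, HasDerivAt (fun t => ψ (θ t)) (-(F (θ t))) t := by
    intro t ht
    have h2 := (hψderiv (θ t) (hθIco t ht)).comp t (hθderiv t ht)
    refine h2.congr_deriv ?_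
    have h3 : ψ (θ t) ≠ 0 := (hψpos (θ t) (hθIco t ht)).ne'
    field_simp
  have hFθcont : ContinuousOn (fun t => F (θ t)) U := by
    apply ContinuousOn.comp hFc hθcontOn
    intro t ht
    exact Ico_subset_Icc_self (hθIco t ht)
  have cd2 : ContDiffOn ℝ 2 θ U := by
    rw [show (2 : WithTop ℕ∞) = 1 + 1 by norm_num,
      contDiffOn_succ_iff_deriv_of_isOpen hUopen]
    refine ⟨fun t ht => (hθderiv t ht).differentiableAt.differentiableWithinAt, by simp, ?_⟩
    rw [contDiffOn_congr (f := fun t => ψ (θ t)) (fun t ht => (hθderiv t ht).deriv)]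
    rw [show (1 : WithTop ℕ∞) = 0 + 1 by norm_num,
      contDiffOn_succ_iff_deriv_of_isOpen hUopen]
    refine ⟨fun t ht => (hψθderiv t ht).differentiableAt.differentiableWithinAt, by simp, ?_⟩
    rw [contDiffOn_zero]
    exact ContinuousOn.congr hFθcont.neg (fun t ht => (hψθderiv t ht).deriv)
  have hDW : ∀ x ∈ Ici (0:ℝ), derivWithin θ (Ici 0) x = ψ (θ x) := by
    intro x hx
    rw [(hθderiv x (hUIci hx)).differentiableAt.derivWithin (uniqueDiffOn_Ici 0 x hx)]
    exact (hθderiv x (hUIci hx)).deriv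
  have hDW2 : ∀ x ∈ Ici (0:ℝ), derivWithin (derivWithin θ (Ici 0)) (Ici 0) x = -(F (θ x)) := by
    intro x hx
    rw [derivWithin_congr hDW (hDW x hx)]
    rw [(hψθderiv x (hUIci hx)).differentiableAt.derivWithin (uniqueDiffOn_Ici 0 x hx)]
    exact (hψθderiv x (hUIci hx)).deriv
  have hθge : ∀ t ∈ Ici (0:ℝ), θhl ≤ θ t := by
    intro t ht
    rw [← hθ0]
    exact hθmono.monotoneOn h0U (hUIci ht) ht
  refine ⟨θ, cd2.mono hUIci, ?_, hθ0, ?_, ?_, ?_, ?_⟩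
  · intro x hx
    rw [hDW2 x hx]
    ring
  · rw [hDW 0 (mem_Ici.2 (le_refl 0)), hθ0, hψθhl]
  · intro x hx
    rw [hDW x hx]
    exact hψpos (θ x) (hθIco x (hUIci hx))
  · rw [tendsto_order]
    constructor
    · intro b hb
      rcases lt_or_ge b θhl with h | h
      · filter_upwards [eventually_ge_atTop (0:ℝ)] with t ht
        exact lt_of_lt_of_le h (hθge t ht)
      · obtain ⟨T, hT0, hTU, hθT⟩ := hXfacts b ⟨h, hb⟩
        filter_upwards [eventually_gt_atTop T] with t htT
        have h2 : θ T < θ t := hθmono hTU (lt_trans hTU htT) htT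
        rwa [hθT] at h2
    · intro b hb
      filter_upwards [eventually_ge_atTop (0:ℝ)] with t ht
      exact lt_trans (hθIco t (hUIci ht)).2 hb
  · intro x hx
    rw [hDW x hx, hψsq (θ x) (hθIco x (hUIci hx))]
    ring
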